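/- arXiv:2009.03215 — 3 statements merged into one kernel-verified Lean document; each statement's English description precedes it below -/
import Mathlib

section
/- Let K be a field of characteristic 0, n ≥ 2, and take ℓ = n−1. If the restricted matching field ideal F_{n,n−1,w} is nonzero and monomial-free (i.e., w ∈ T_{n,n−1}), then w has the descending property, i.e. w ∈ S_n^>. -/
open MvPolynomial

/-- Index type for the Plücker variables `P_J`: nonempty proper subsets of `{1,…,n}`
(encoded as `Fin n`, where `i : Fin n` stands for the value `i+1`). -/
abbrev PIdx (n : ℕ) := {J : Finset (Fin n) // J.Nonempty ∧ J ≠ Finset.univ}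

/-- The transposition (1 2) acting on (1-based) row indices. -/
def swap12 (r : ℕ) : ℕ := if r = 1 then 2 else if r = 2 then 1 else r

/-- The image of the Plücker variable `P_J` under the monomial map `φ_ℓ` associated to the
block diagonal matching field `B_ℓ`: writing `J = {j_1 < … < j_k}` (as 1-based values),
it is `sgn(σ)·x_{σ(1),j_1}⋯x_{σ(k),j_k}` where `σ = id` if `|J| = 1` or
`|J ∩ {1,…,ℓ}| ≥ 2`, and `σ = (1 2)` otherwise. Variables `x_{i,j}` are indexed by
pairs of 1-based natural numbers. -/
noncomputable def phiVal (K : Type*) [CommRing K] (n ℓ : ℕ) (J : Finset (Fin n)) :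
    MvPolynomial (ℕ × ℕ) K :=
  let l : List ℕ := (J.sort (· ≤ ·)).map (fun j => (j : ℕ) + 1)
  if J.card = 1 ∨ 2 ≤ (J.filter (fun j : Fin n => (j : ℕ) + 1 ≤ ℓ)).card then
    ((List.range l.length).map
      (fun r => (X (r + 1, l.getD r 0) : MvPolynomial (ℕ × ℕ) K))).prod
  else
    - ((List.range l.length).map
      (fun r => (X (swap12 (r + 1), l.getD r 0) : MvPolynomial (ℕ × ℕ) K))).prod

/-- The monomial map `φ_ℓ : K[P_J] → K[x_{i,j}]`. -/
noncomputable def phiMap (K : Type*) [CommRing K] (n ℓ : ℕ) :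
    MvPolynomial (PIdx n) K →ₐ[K] MvPolynomial (ℕ × ℕ) K :=
  aeval (fun J => phiVal K n ℓ J.1)

/-- The matching field ideal `F_{n,ℓ} = ker φ_ℓ`. -/
noncomputable def Fnl (K : Type*) [CommRing K] (n ℓ : ℕ) :
    Ideal (MvPolynomial (PIdx n) K) :=
  RingHom.ker (phiMap K n ℓ)

/-- Componentwise comparison `A ≤ B` of two finsets via their increasing enumerations. -/
def finsetLE {n : ℕ} (A B : Finset (Fin n)) : Prop :=
  List.Forall₂ (· ≤ ·) (A.sort (· ≤ ·)) (B.sort (· ≤ ·))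

/-- The set `{w_1, …, w_k}` of the first `k` values of the one-line notation of `w`. -/
def initSet {n : ℕ} (w : Equiv.Perm (Fin n)) (k : ℕ) : Finset (Fin n) :=
  (Finset.univ.filter (fun i : Fin n => (i : ℕ) < k)).image w

/-- `S_w`: the set of subsets `J` with `J ≰ {w_1,…,w_{|J|}}`. -/
def Sw {n : ℕ} (w : Equiv.Perm (Fin n)) : Set (Finset (Fin n)) :=
  {J | ¬ finsetLE J (initSet w J.card)}

/-- Index type for the Plücker variables that do not vanish on the Schubert variety `X(w)`. -/
abbrev RIdx (n : ℕ) (w : Equiv.Perm (Fin n)) := {J : PIdx n // J.1 ∉ Sw w}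

open Classical in
/-- The projection `π_w` sending `P_J ↦ 0` for `J ∈ S_w` and `P_J ↦ P_J` otherwise. -/
noncomputable def piw (K : Type*) [CommRing K] {n : ℕ} (w : Equiv.Perm (Fin n)) :
    MvPolynomial (PIdx n) K →ₐ[K] MvPolynomial (RIdx n w) K :=
  aeval (fun J => if h : J.1 ∈ Sw w then 0 else X (⟨J, h⟩ : RIdx n w))

/-- The restricted matching field ideal `F_{n,ℓ,w} = π_w(F_{n,ℓ})`. -/
noncomputable def Fnlw (K : Type*) [CommRing K] (n ℓ : ℕ) (w : Equiv.Perm (Fin n)) :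
    Ideal (MvPolynomial (RIdx n w) K) :=
  Ideal.map (piw K w) (Fnl K n ℓ)

/-- An ideal of a polynomial ring is monomial-free if it contains no (nonzero) monomial. -/
def MonomialFree {σ K : Type*} [CommSemiring K] (I : Ideal (MvPolynomial σ K)) : Prop :=
  ∀ m : σ →₀ ℕ, (monomial m (1 : K)) ∉ I

/-- The adjacent transposition `s_{i+1} = (i+1, i+2)` (1-based), i.e. the swap of the
0-based positions `i` and `i+1` of `Fin n`. -/
def adjT (n i : ℕ) : Equiv.Perm (Fin n) :=
  if h : i + 1 < n then Equiv.swap ⟨i, Nat.lt_of_succ_lt h⟩ ⟨i + 1, h⟩ else 1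

/-- `Z_n`: permutations that are products of adjacent transpositions with pairwise
distance at least 2 between the indices. -/
def Zset (n : ℕ) : Set (Equiv.Perm (Fin n)) :=
  {w | ∃ l : List ℕ, (∀ i ∈ l, i + 1 < n) ∧
        l.Pairwise (fun i j => i + 2 ≤ j ∨ j + 2 ≤ i) ∧
        w = (l.map (adjT n)).prod}

/-- `oneLine w i = w_i` : the `i`-th entry (1-based, with 1-based values) of the
one-line notation of `w`. -/
def oneLine {n : ℕ} (w : Equiv.Perm (Fin n)) (i : ℕ) : ℕ :=
  if h : i - 1 < n then (w ⟨i - 1, h⟩ : ℕ) + 1 else 0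

/-- The (1-based) position `t` with `w_t = n`. -/
def posOfTop {n : ℕ} (w : Equiv.Perm (Fin n)) : ℕ :=
  if h : 0 < n then ((w.symm ⟨n - 1, by omega⟩ : ℕ) + 1) else 0

/-- `deleteTop w u` holds iff `u = ul(w)` is obtained from `w` by deleting the entry `n`
from its one-line notation. -/
def deleteTop {n : ℕ} (w : Equiv.Perm (Fin n)) (u : Equiv.Perm (Fin (n - 1))) : Prop :=
  ∀ i, 1 ≤ i → i ≤ n - 1 →
    oneLine u i = if i < posOfTop w then oneLine w i else oneLine w (i + 1)

/-- The descending property: writing `w_t = n`, one has `w_t > w_{t+1} > … > w_n`. -/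
def descendingProp {n : ℕ} (w : Equiv.Perm (Fin n)) : Prop :=
  ∀ i, posOfTop w ≤ i → i < n → oneLine w (i + 1) < oneLine w i

/-- `T_{n,ℓ}`: the set of permutations `w` for which `F_{n,ℓ,w}` is nonzero and
monomial-free. -/
def Tset (K : Type*) [Field K] (n ℓ : ℕ) : Set (Equiv.Perm (Fin n)) :=
  {w | Fnlw K n ℓ w ≠ ⊥ ∧ MonomialFree (Fnlw K n ℓ w)}

/-- The one-line notation of `w` as a list of 1-based values. -/
def olList {n : ℕ} (w : Equiv.Perm (Fin n)) : List ℕ :=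
  (List.finRange n).map (fun i => (w i : ℕ) + 1)

/-- A list of naturals is 312-free if it has no subsequence of type 312. -/
def List312Free (l : List ℕ) : Prop :=
  ¬ ∃ i j k : ℕ, i < j ∧ j < k ∧ k < l.length ∧
      l.getD j 0 < l.getD k 0 ∧ l.getD k 0 < l.getD i 0

/-- The decreasing list `[a, a-1, …, 1]`. -/
def descTo1 (a : ℕ) : List ℕ := (List.range a).reverse.map (· + 1)

/-- The set `P_ℓ ⊆ S_n`. -/
def Pset (n ℓ : ℕ) : Set (Equiv.Perm (Fin n)) :=
  if ℓ = n then {w | List312Free (olList w)}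
  else
    {w | (¬ List312Free (olList w) →
            oneLine w 2 = ℓ ∧ oneLine w 2 < oneLine w 1 ∧
            List312Free ((olList w).erase ℓ)) ∧
         (∀ m, 3 ≤ m → m ≤ n →
            (olList w).filter (fun v => v ≤ m) = (m - 1) :: m :: descTo1 (m - 2) →
            oneLine w 1 < oneLine w 2 ∧ oneLine w 2 ≤ ℓ ∧
            (olList w).filter (fun v => v ≤ oneLine w 2) =
              oneLine w 1 :: oneLine w 2 ::
                ((descTo1 (oneLine w 2 - 1)).filter (fun v => v ≠ oneLine w 1)))}

/-- The set `A_1`. -/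
def A1set (n : ℕ) : Set (Equiv.Perm (Fin n)) :=
  {w | (∃ u : Equiv.Perm (Fin (n - 1)), deleteTop w u ∧ u ∈ Zset (n - 1)) ∧
       oneLine w n = n - 2 ∧
       ({oneLine w (n - 2), oneLine w (n - 1)} : Set ℕ) = {n - 1, n}}

/-- The set `A_2` (with `ul(w) ∈ T_{n-1,ℓ'}`). -/
def A2set (K : Type*) [Field K] (n ℓ' : ℕ) : Set (Equiv.Perm (Fin n)) :=
  {w | (∃ u : Equiv.Perm (Fin (n - 1)),
          deleteTop w u ∧ u ∈ Tset K (n - 1) ℓ' ∧ descendingProp u) ∧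
       (∀ s t, 1 ≤ s → s ≤ n → 1 ≤ t → t ≤ n →
          oneLine w s = n - 1 → oneLine w t = n → s - 1 ≤ t)}

/-!
If `w` is not descending, it has an ascent `w_i < w_{i+1}` to the right of the entry `n`. Put
`S = {w_1, …, w_{i-1}}` (which contains `n`), `a = w_i` and `b = w_{i+1}`. The ideal `F_{n,n-1}`
contains a binomial `P_A P_B ± P_C P_D` with `B = S ∪ {b}`: as `a < b`, the sum of `B` exceeds that
of `{w_1, …, w_i} = S ∪ {a}`, so `P_B` dies under `π_w`, while `C` and `D` lie below the initial
sets of `w` of their size. Hence `π_w` maps the binomial to a nonzero multiple of the monomial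
`P_C P_D`. If `S ≠ {n}`, all four blocks are diagonal and the binomial is
`P_{Y∪a} P_{Y∪b∪n} - P_{Y∪b} P_{Y∪a∪n}` with `Y = S \ {n}`, because appending the largest column
`n` multiplies both sides by the same variable; if `S = {n}`, the block `{b, n}` is twisted by
`(1 2)` and the binomial is `P_a P_{bn} + P_{ab} P_n`.
-/

namespace List

variable {α : Type*} [LinearOrder α]

theorem orderedInsert_eq_append_of_forall_lt {a : α} {l : List α} (h : ∀ x ∈ l, x < a) :
    l.orderedInsert (· ≤ ·) a = l ++ [a] := by
  induction l with
  | nil => rfl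
  | cons x xs ih =>
    rw [orderedInsert_of_not_le _ _ (not_le.mpr (h x mem_cons_self)),
      ih fun y hy => h y (mem_cons_of_mem x hy), cons_append]

theorem forall₂_cons_orderedInsert {x c : α} {l : List α} (hl : (x :: l).Pairwise (· ≤ ·))
    (hxc : x ≤ c) : Forall₂ (· ≤ ·) (x :: l) (l.orderedInsert (· ≤ ·) c) := by
  induction l generalizing x with
  | nil => exact .cons hxc .nil
  | cons y ys ih =>
    by_cases hcy : c ≤ y
    · rw [orderedInsert_cons_of_le _ _ hcy]
      exact .cons hxc (forall₂_same.mpr fun _ _ => le_rfl)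
    · rw [orderedInsert_of_not_le _ _ hcy]
      exact .cons (rel_of_pairwise_cons hl mem_cons_self) (ih hl.of_cons (le_of_not_ge hcy))

theorem forall₂_orderedInsert_of_le {b c : α} (hbc : b ≤ c) {l : List α}
    (hl : l.Pairwise (· ≤ ·)) :
    Forall₂ (· ≤ ·) (l.orderedInsert (· ≤ ·) b) (l.orderedInsert (· ≤ ·) c) := by
  induction l with
  | nil => exact .cons hbc .nil
  | cons x xs ih =>
    by_cases hbx : b ≤ x
    · rw [orderedInsert_cons_of_le _ _ hbx]
      by_cases hcx : c ≤ x
      · rw [orderedInsert_cons_of_le _ _ hcx]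
        exact .cons hbc (forall₂_same.mpr fun _ _ => le_rfl)
      · rw [orderedInsert_of_not_le _ _ hcx]
        exact .cons hbx (forall₂_cons_orderedInsert hl (le_of_not_ge hcx))
    · have hcx : ¬ c ≤ x := fun h => hbx (hbc.trans h)
      rw [orderedInsert_of_not_le _ _ hbx, orderedInsert_of_not_le _ _ hcx]
      exact .cons le_rfl (ih hl.of_cons)

end List

namespace Finset

variable {α : Type*} [LinearOrder α]

theorem sort_insert_eq_orderedInsert {s : Finset α} {b : α} (h : b ∉ s) :
    (insert b s).sort = s.sort.orderedInsert (· ≤ ·) b := by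
  refine List.Perm.eq_of_pairwise' (pairwise_sort _ _)
    ((pairwise_sort _ _).orderedInsert _ _) (Multiset.coe_eq_coe.mp ?_)
  rw [sort_eq, Multiset.coe_eq_coe.mpr (List.perm_orderedInsert _ _ _), ← Multiset.cons_coe,
    sort_eq, insert_val_of_notMem h]

theorem sort_insert_of_forall_lt {s : Finset α} {a : α} (h : ∀ x ∈ s, x < a) :
    (insert a s).sort = s.sort ++ [a] := by
  rw [sort_insert_eq_orderedInsert fun ha => lt_irrefl a (h a ha),
    List.orderedInsert_eq_append_of_forall_lt fun x hx => h x ((mem_sort _).mp hx)]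

theorem sum_sort {β : Type*} [AddCommMonoid β] (s : Finset α) (f : α → β) :
    (s.sort.map f).sum = ∑ x ∈ s, f x := by
  rw [sum_eq_multiset_sum, ← sort_eq s (· ≤ ·), Multiset.map_coe, Multiset.sum_coe]

end Finset

open Finset

section Schubert

variable {n : ℕ}

theorem finsetLE_refl (s : Finset (Fin n)) : finsetLE s s :=
  List.forall₂_same.mpr fun _ _ => le_rfl

theorem finsetLE.sum_le {s t : Finset (Fin n)} (h : finsetLE s t) :
    ∑ x ∈ s, (x : ℕ) ≤ ∑ x ∈ t, (x : ℕ) := by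
  rw [← sum_sort s Fin.val, ← sum_sort t Fin.val]
  exact List.Forall₂.sum_le_sum (M := ℕ)
    (List.forall₂_map_left_iff.mpr (List.forall₂_map_right_iff.mpr h))

theorem finsetLE_insert_of_le {s : Finset (Fin n)} {b c : Fin n} (hbc : b ≤ c) (hb : b ∉ s)
    (hc : c ∉ s) : finsetLE (insert b s) (insert c s) := by
  rw [finsetLE, sort_insert_eq_orderedInsert hb, sort_insert_eq_orderedInsert hc]
  exact List.forall₂_orderedInsert_of_le hbc (pairwise_sort _ _)

theorem mem_initSet {w : Equiv.Perm (Fin n)} {k : ℕ} {j : Fin n} :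
    j ∈ initSet w k ↔ (w.symm j : ℕ) < k := by
  simp only [initSet, mem_image, mem_filter, mem_univ, true_and]
  exact ⟨fun ⟨i, hi, hij⟩ => by rwa [← hij, Equiv.symm_apply_apply],
    fun h => ⟨w.symm j, h, w.apply_symm_apply j⟩⟩

theorem card_initSet (w : Equiv.Perm (Fin n)) {k : ℕ} (hk : k ≤ n) :
    (initSet w k).card = k := by
  rw [initSet, card_image_of_injective _ w.injective, Fin.card_filter_val_lt, min_eq_right hk]

theorem initSet_succ (w : Equiv.Perm (Fin n)) {k : ℕ} (hk : k < n) :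
    initSet w (k + 1) = insert (w ⟨k, hk⟩) (initSet w k) := by
  ext j
  simp only [mem_insert, mem_initSet, ← Equiv.symm_apply_eq, Fin.ext_iff]
  omega

theorem notMem_Sw_of_initSet_eq {w : Equiv.Perm (Fin n)} {J : Finset (Fin n)}
    (h : initSet w J.card = J) : J ∉ Sw w := by
  simp only [Sw, Set.mem_ofPred_eq, h, not_not]
  exact finsetLE_refl J

theorem insert_mem_Sw {w : Equiv.Perm (Fin n)} {s : Finset (Fin n)} {a b : Fin n}
    (hs : initSet w (s.card + 1) = insert a s) (ha : a ∉ s) (hb : b ∉ s) (hab : a < b) :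
    insert b s ∈ Sw w := by
  intro hle
  have := hle.sum_le
  rw [card_insert_of_notMem hb, hs, sum_insert ha, sum_insert hb] at this
  exact absurd this (by simpa using Fin.lt_def.mp hab)

theorem insert_notMem_Sw {w : Equiv.Perm (Fin n)} {s : Finset (Fin n)} {b c : Fin n}
    (hs : initSet w (s.card + 1) = insert c s) (hb : b ∉ s) (hc : c ∉ s) (hbc : b ≤ c) :
    insert b s ∉ Sw w := by
  simp only [Sw, Set.mem_ofPred_eq, not_not, card_insert_of_notMem hb, hs]
  exact finsetLE_insert_of_le hbc hb hc

end Schubert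

section MatchingField

variable (K : Type*) [CommRing K] {n : ℕ}

noncomputable def diagMonomial (l : List ℕ) : MvPolynomial (ℕ × ℕ) K :=
  ((List.range l.length).map fun r => X (r + 1, l.getD r 0)).prod

theorem diagMonomial_concat (l : List ℕ) (c : ℕ) :
    diagMonomial K (l ++ [c]) = diagMonomial K l * X (l.length + 1, c) := by
  simp only [diagMonomial, List.length_append, List.length_singleton, List.range_succ,
    List.map_append, List.prod_append, List.map_singleton, List.prod_singleton,
    List.getD_append_right, le_refl, Nat.sub_self, List.getD_cons_zero]
  congr 1
  refine congrArg List.prod (List.map_congr_left fun r hr => ?_)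
  rw [List.getD_append _ _ _ _ (List.mem_range.mp hr)]

/-- `B_ℓ(J) = id`. -/
def IsDiagonal (ℓ : ℕ) (J : Finset (Fin n)) : Prop :=
  J.card = 1 ∨ 2 ≤ (J.filter fun j : Fin n => (j : ℕ) + 1 ≤ ℓ).card

variable {K}

theorem phiVal_of_isDiagonal {ℓ : ℕ} {J : Finset (Fin n)} (h : IsDiagonal ℓ J) :
    phiVal K n ℓ J = diagMonomial K (J.sort.map fun j : Fin n => (j : ℕ) + 1) := by
  unfold IsDiagonal at h
  simp only [phiVal, if_pos h, List.pure_def, List.bind_eq_flatMap, ← List.map_eq_flatMap,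
    List.map_map]
  rfl

theorem phiVal_insert_of_forall_lt {ℓ : ℕ} {J : Finset (Fin n)} {t : Fin n}
    (hJ : IsDiagonal ℓ J) (hJt : IsDiagonal ℓ (insert t J)) (ht : ∀ x ∈ J, x < t) :
    phiVal K n ℓ (insert t J) = phiVal K n ℓ J * X (J.card + 1, (t : ℕ) + 1) := by
  rw [phiVal_of_isDiagonal hJt, phiVal_of_isDiagonal hJ, sort_insert_of_forall_lt ht,
    List.map_append, List.map_singleton, diagMonomial_concat, List.length_map, length_sort]

theorem mem_Fnl_iff {ℓ : ℕ} {f : MvPolynomial (PIdx n) K} :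
    f ∈ Fnl K n ℓ ↔ aeval (fun J : PIdx n => phiVal K n ℓ J.1) f = 0 :=
  RingHom.mem_ker

theorem X_mul_X_sub_X_mul_X_mem_Fnl {ℓ : ℕ} {A B C D : PIdx n} {t : Fin n}
    (hB : B.1 = insert t C.1) (hD : D.1 = insert t A.1) (hAC : A.1.card = C.1.card)
    (hAt : ∀ x ∈ A.1, x < t) (hCt : ∀ x ∈ C.1, x < t)
    (hA : IsDiagonal ℓ A.1) (hB' : IsDiagonal ℓ B.1) (hC : IsDiagonal ℓ C.1)
    (hD' : IsDiagonal ℓ D.1) :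
    X A * X B - X C * X D ∈ Fnl K n ℓ := by
  rw [hB] at hB'
  rw [hD] at hD'
  rw [mem_Fnl_iff, map_sub, map_mul, map_mul, aeval_X, aeval_X, aeval_X, aeval_X, hB, hD,
    phiVal_insert_of_forall_lt hC hB' hCt, phiVal_insert_of_forall_lt hA hD' hAt, hAC]
  ring

theorem X_mul_X_add_X_mul_X_mem_Fnl {ℓ : ℕ} {A B C D : PIdx n} {a b t : Fin n}
    (hA : A.1 = {a}) (hB : B.1 = {b, t}) (hC : C.1 = {a, b}) (hD : D.1 = {t})
    (hab : a < b) (hbt : b < t) (hbℓ : (b : ℕ) + 1 ≤ ℓ) (htℓ : ℓ < (t : ℕ) + 1) :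
    X A * X B + X C * X D ∈ Fnl K n ℓ := by
  have hsort : ∀ {x y : Fin n}, x < y → ({x, y} : Finset (Fin n)).sort = [x, y] := fun hxy => by
    rw [sort_insert _ (by simpa using hxy.le) (by simpa using hxy.ne), sort_singleton]
  have hbtFilter : ({b, t} : Finset (Fin n)).filter (fun j : Fin n => (j : ℕ) + 1 ≤ ℓ) = {b} := by
    ext x; simp only [mem_filter, mem_insert, mem_singleton]; grind [Fin.lt_def]
  have habDiag : IsDiagonal ℓ ({a, b} : Finset (Fin n)) := by
    right
    rw [filter_true_of_mem fun x hx => by grind [Fin.lt_def], card_pair hab.ne]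
  have hbtNotDiag : ¬ IsDiagonal ℓ ({b, t} : Finset (Fin n)) := by
    rw [IsDiagonal, hbtFilter, card_pair hbt.ne, card_singleton]
    omega
  have hφA : phiVal K n ℓ {a} = X (1, (a : ℕ) + 1) := by
    simp [phiVal_of_isDiagonal (Or.inl (card_singleton a)), diagMonomial]
  have hφD : phiVal K n ℓ {t} = X (1, (t : ℕ) + 1) := by
    simp [phiVal_of_isDiagonal (Or.inl (card_singleton t)), diagMonomial]
  have hφC : phiVal K n ℓ {a, b} = X (1, (a : ℕ) + 1) * X (2, (b : ℕ) + 1) := by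
    simp [phiVal_of_isDiagonal habDiag, hsort hab, diagMonomial, List.range_succ]
  have hφB : phiVal K n ℓ {b, t} = -(X (2, (b : ℕ) + 1) * X (1, (t : ℕ) + 1)) := by
    unfold IsDiagonal at hbtNotDiag
    simp only [phiVal, if_neg hbtNotDiag]
    simp [hsort hbt, swap12, List.range_succ]
  rw [mem_Fnl_iff, map_add, map_mul, map_mul, aeval_X, aeval_X, aeval_X, aeval_X, hA, hB, hC, hD,
    hφA, hφB, hφC, hφD]
  ring

end MatchingField

theorem not_monomialFree_of_mem_Fnl {K : Type*} [Field K] {n ℓ : ℕ} {w : Equiv.Perm (Fin n)} {A B C D : PIdx n}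
    {c : K} (hc : c ≠ 0) (h : X A * X B + c • (X C * X D) ∈ Fnl K n ℓ)
    (hB : B.1 ∈ Sw w) (hC : C.1 ∉ Sw w) (hD : D.1 ∉ Sw w) :
    ¬ MonomialFree (Fnlw K n ℓ w) := by
  intro hmf
  have himage : piw K w (X A * X B + c • (X C * X D)) =
      MvPolynomial.C c * monomial (Finsupp.single ⟨C, hC⟩ 1 + Finsupp.single ⟨D, hD⟩ 1) 1 := by
    rw [map_add, map_smul, map_mul, map_mul, piw, aeval_X, aeval_X, aeval_X, aeval_X,
      dif_pos hB, dif_neg hC, dif_neg hD, mul_zero, zero_add, X, X, monomial_mul,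
      one_mul, smul_eq_C_mul]
  have hmem := Ideal.mul_mem_left _ (MvPolynomial.C c⁻¹) (Ideal.mem_map_of_mem (piw K w) h)
  rw [himage, ← mul_assoc, ← C_mul, inv_mul_cancel₀ hc, C_1, one_mul] at hmem
  exact hmf _ hmem

def toPIdx {n : ℕ} (J : Finset (Fin n)) {x y : Fin n} (hx : x ∈ J) (hy : y ∉ J) : PIdx n :=
  ⟨J, ⟨x, hx⟩, fun h => hy (h ▸ mem_univ y)⟩

section Ascent

variable {K : Type*} [Field K] {m : ℕ} {w : Equiv.Perm (Fin (m + 1))}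
  {S : Finset (Fin (m + 1))} {a b : Fin (m + 1)}

theorem isDiagonal_iff {J : Finset (Fin (m + 1))} :
    IsDiagonal m J ↔ J.card = 1 ∨ 2 ≤ (J.erase (Fin.last m)).card := by
  have hfilter : J.filter (fun j : Fin (m + 1) => (j : ℕ) + 1 ≤ m) = J.erase (Fin.last m) := by
    ext x
    simp only [mem_filter, mem_erase, ne_eq, Fin.ext_iff, Fin.val_last, and_comm]
    exact and_congr_left fun _ => by omega
  rw [IsDiagonal, hfilter]

theorem isDiagonal_insert_of_nonempty {Y : Finset (Fin (m + 1))} {c : Fin (m + 1)}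
    (hY : Y.Nonempty) (hcY : c ∉ Y) (hc : c ≠ Fin.last m) (htY : Fin.last m ∉ Y) :
    IsDiagonal m (insert c Y) ∧ IsDiagonal m (insert c (insert (Fin.last m) Y)) := by
  have htcY : Fin.last m ∉ insert c Y := fun h => (mem_insert.mp h).elim (fun h => hc h.symm) htY
  have hcard : 2 ≤ (insert c Y).card := by
    rw [card_insert_of_notMem hcY]
    have := hY.card_pos
    omega
  rw [isDiagonal_iff, isDiagonal_iff, insert_comm, erase_insert htcY, erase_eq_of_notMem htcY]
  exact ⟨.inr hcard, .inr hcard⟩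

theorem not_monomialFree_of_ascent_of_eq_singleton (hS : initSet w S.card = S)
    (hSa : initSet w (S.card + 1) = insert a S) (hSt : S = {Fin.last m}) (hab : a < b)
    (hbS : b ∉ S) :
    ¬ MonomialFree (Fnlw K (m + 1) m w) := by
  subst hSt
  set t := Fin.last m
  have hbt : b < t := lt_of_le_of_ne (Fin.le_last b) (by simpa using hbS)
  have hat : a < t := hab.trans hbt
  have hta : t ∉ ({a} : Finset _) := by simpa using hat.ne'
  let A := toPIdx {a} (mem_singleton_self a) hta
  let B := toPIdx {b, t} (mem_insert_self b _) (by simp [hab.ne, hat.ne] : a ∉ _)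
  let C := toPIdx {a, b} (mem_insert_self a _) (by simp [hat.ne', hbt.ne'] : t ∉ _)
  let D := toPIdx {t} (mem_singleton_self t) (by simpa using hat.ne : a ∉ _)
  have hrel : X A * X B + (1 : K) • (X C * X D) ∈ Fnl K (m + 1) m := by
    rw [one_smul]
    exact X_mul_X_add_X_mul_X_mem_Fnl rfl rfl rfl rfl hab hbt hbt (by simp [t])
  refine not_monomialFree_of_mem_Fnl one_ne_zero hrel ?_ ?_ ?_
  · exact insert_mem_Sw hSa (by simpa using hat.ne) hbS hab
  · have hSa' : initSet w (({a} : Finset _).card + 1) = insert t {a} := by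
      rw [card_singleton] at hSa
      rw [card_singleton, hSa, pair_comm]
    show {a, b} ∉ Sw w
    rw [pair_comm]
    exact insert_notMem_Sw hSa' (by simpa using hab.ne') hta hbt.le
  · exact notMem_Sw_of_initSet_eq hS

theorem not_monomialFree_of_ascent_of_nonempty (hS : initSet w S.card = S)
    (hSa : initSet w (S.card + 1) = insert a S) (htS : Fin.last m ∈ S)
    (hY : (S.erase (Fin.last m)).Nonempty) (hab : a < b) (haS : a ∉ S) (hbS : b ∉ S) :
    ¬ MonomialFree (Fnlw K (m + 1) m w) := by
  set t := Fin.last m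
  set Y := S.erase t
  have hbt : b < t := lt_of_le_of_ne (Fin.le_last b) (by rintro rfl; exact hbS htS)
  have hat : a < t := hab.trans hbt
  have hYt : ∀ x ∈ Y, x < t := fun x hx => lt_of_le_of_ne (Fin.le_last x) (ne_of_mem_erase hx)
  have haY : a ∉ Y := fun h => haS (mem_of_mem_erase h)
  have hbY : b ∉ Y := fun h => hbS (mem_of_mem_erase h)
  have htY : t ∉ Y := notMem_erase t S
  have hSY : S = insert t Y := (insert_erase htS).symm
  let A := toPIdx (insert a Y) (mem_insert_self a Y) (by simp [hat.ne', htY] : t ∉ _)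
  let B := toPIdx (insert b S) (mem_insert_self b S) (by simp [hab.ne, haS] : a ∉ _)
  let C := toPIdx (insert b Y) (mem_insert_self b Y) (by simp [hbt.ne', htY] : t ∉ _)
  let D := toPIdx (insert a S) (mem_insert_self a S) (by simp [hab.ne', hbS] : b ∉ _)
  have hdiag : ∀ c, c ∉ Y → c ≠ t →
      IsDiagonal m (insert c Y) ∧ IsDiagonal m (insert c S) := fun c hc hct => by
    rw [hSY]
    exact isDiagonal_insert_of_nonempty hY hc hct htY
  have hrel : X A * X B + (-1 : K) • (X C * X D) ∈ Fnl K (m + 1) m := by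
    rw [neg_one_smul, ← sub_eq_add_neg]
    refine X_mul_X_sub_X_mul_X_mem_Fnl (t := t) ?_ ?_ ?_ ?_ ?_ (hdiag a haY hat.ne).1
      (hdiag b hbY hbt.ne).2 (hdiag b hbY hbt.ne).1 (hdiag a haY hat.ne).2
    · show insert b S = insert t (insert b Y)
      rw [hSY, insert_comm]
    · show insert a S = insert t (insert a Y)
      rw [hSY, insert_comm]
    · show (insert a Y).card = (insert b Y).card
      rw [card_insert_of_notMem haY, card_insert_of_notMem hbY]
    · exact forall_mem_insert _ _ _ |>.mpr ⟨hat, hYt⟩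
    · exact forall_mem_insert _ _ _ |>.mpr ⟨hbt, hYt⟩
  refine not_monomialFree_of_mem_Fnl (neg_ne_zero.mpr one_ne_zero) hrel
    (insert_mem_Sw hSa haS hbS hab) ?_ ?_
  · have hYS : initSet w (Y.card + 1) = insert t Y := by
      rw [← hSY, card_erase_add_one htS, hS]
    exact insert_notMem_Sw hYS hbY htY hbt.le
  · show insert a S ∉ Sw w
    exact notMem_Sw_of_initSet_eq (by rw [card_insert_of_notMem haS, hSa])

theorem exists_ascent_of_not_descendingProp (h : ¬ descendingProp w) :
    ∃ p, ∃ hp : p + 1 < m + 1,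
      (w.symm (Fin.last m) : ℕ) < p ∧ w ⟨p, by omega⟩ < w ⟨p + 1, hp⟩ := by
  simp only [descendingProp, not_forall, not_lt] at h
  obtain ⟨i, hti, hi, hle⟩ := h
  have hlast : (⟨m + 1 - 1, by omega⟩ : Fin (m + 1)) = Fin.last m := Fin.ext (by simp)
  rw [posOfTop, dif_pos (Nat.succ_pos m), hlast] at hti
  obtain ⟨p, rfl⟩ : ∃ p, i = p + 1 := ⟨i - 1, by omega⟩
  have hp : p + 1 < m + 1 := hi
  simp only [oneLine, Nat.add_sub_cancel, dif_pos (Nat.lt_of_succ_lt hp), dif_pos hp,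
    Nat.add_le_add_iff_right] at hle
  have hab : w ⟨p, by omega⟩ < w ⟨p + 1, hp⟩ :=
    lt_of_le_of_ne (Fin.le_def.mpr hle) fun h => by simpa using w.injective h
  refine ⟨p, hp, lt_of_le_of_ne (by omega) fun h => ?_, hab⟩
  have : w ⟨p, by omega⟩ = Fin.last m := by
    rw [← w.apply_symm_apply (Fin.last m)]; exact congrArg w (Fin.ext h.symm)
  exact absurd (Fin.le_last (w ⟨p + 1, hp⟩)) (not_le.mpr (this ▸ hab))

theorem not_monomialFree_of_not_descendingProp (h : ¬ descendingProp w) :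
    ¬ MonomialFree (Fnlw K (m + 1) m w) := by
  obtain ⟨p, hp, htop, hab⟩ := exists_ascent_of_not_descendingProp h
  set S := initSet w p
  have hcard : S.card = p := card_initSet w (by omega)
  have hS : initSet w S.card = S := by rw [hcard]
  have hSa : initSet w (S.card + 1) = insert (w ⟨p, by omega⟩) S := by rw [hcard, initSet_succ]
  have htS : Fin.last m ∈ S := mem_initSet.mpr htop
  have haS : w ⟨p, by omega⟩ ∉ S := by simp [S, mem_initSet]
  have hbS : w ⟨p + 1, hp⟩ ∉ S := by simp [S, mem_initSet]
  obtain hY | hY := (S.erase (Fin.last m)).eq_empty_or_nonempty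
  · have hSt : S = {Fin.last m} :=
      ((erase_eq_empty_iff _ _).mp hY).resolve_left (ne_empty_of_mem htS)
    exact not_monomialFree_of_ascent_of_eq_singleton hS hSa hSt hab hbS
  · exact not_monomialFree_of_ascent_of_nonempty hS hSa htS hY hab haS hbS

end Ascent

theorem stmt8_general (K : Type*) [Field K] (n : ℕ)
    (w : Equiv.Perm (Fin n)) (hw : w ∈ Tset K n (n - 1)) : descendingProp w := by
  obtain _ | m := n
  · exact fun i _ hi => absurd hi (Nat.not_lt_zero i)
  · by_contra h
    exact not_monomialFree_of_not_descendingProp h hw.2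

theorem stmt8 (K : Type*) [Field K] [CharZero K] (n : ℕ) (hn : 2 ≤ n)
    (w : Equiv.Perm (Fin n)) (hw : w ∈ Tset K n (n - 1)) : descendingProp w :=
  stmt8_general K n w hw
end

section
/- Let K be a field of characteristic 0, n ≥ 3, and 1 ≤ ℓ ≤ n−1. For the permutation w = (n−1, n, n−2, n−3, …, 1) ∈ S_n, the restricted matching field ideal F_{n,ℓ,w} contains a nonzero monomial; in particular F_{n,ℓ,w} is not monomial-free. -/
open MvPolynomial

section Helpers
variable {K : Type*} [CommRing K] {n ℓ : ℕ}

lemma sort_pair_of_lt {a b : Fin n} (h : a < b) :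
    ({a, b} : Finset (Fin n)).sort (· ≤ ·) = [a, b] := by
  rw [Finset.sort_insert]
  · rw [Finset.sort_singleton]
  · intro c hc; simp only [Finset.mem_singleton] at hc; subst hc; exact h.le
  · simp [h.ne]

lemma phiVal_single (a : Fin n) : phiVal K n ℓ {a} = X (1, (a : ℕ) + 1) := by
  unfold phiVal
  simp [Finset.sort_singleton, List.range_succ]

lemma phiVal_pair_pos {a b : Fin n} (h : a < b) (ha : (a : ℕ) + 1 ≤ ℓ)
    (hb : (b : ℕ) + 1 ≤ ℓ) :
    phiVal K n ℓ {a, b} = X (1, (a : ℕ) + 1) * X (2, (b : ℕ) + 1) := by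
  have hcard : ({a, b} : Finset (Fin n)).card = 2 := Finset.card_pair h.ne
  have hfil : ({a, b} : Finset (Fin n)).filter (fun j : Fin n => (j : ℕ) + 1 ≤ ℓ) = {a, b} := by
    apply Finset.filter_true_of_mem
    intro x hx
    simp only [Finset.mem_insert, Finset.mem_singleton] at hx
    rcases hx with rfl | rfl <;> assumption
  unfold phiVal
  rw [sort_pair_of_lt h, if_pos (by rw [hfil, hcard]; omega)]
  simp [List.range_succ]

lemma phiVal_pair_neg {a b : Fin n} (h : a < b) (hb : ℓ < (b : ℕ) + 1) :
    phiVal K n ℓ {a, b} = -(X (2, (a : ℕ) + 1) * X (1, (b : ℕ) + 1)) := by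
  have hcard : ({a, b} : Finset (Fin n)).card = 2 := Finset.card_pair h.ne
  have hfil : (({a, b} : Finset (Fin n)).filter (fun j : Fin n => (j : ℕ) + 1 ≤ ℓ)).card ≤ 1 := by
    have hsub : ({a, b} : Finset (Fin n)).filter (fun j : Fin n => (j : ℕ) + 1 ≤ ℓ) ⊆ {a} := by
      intro x hx
      simp only [Finset.mem_filter, Finset.mem_insert, Finset.mem_singleton] at hx ⊢
      rcases hx.1 with rfl | rfl
      · rfl
      · omega
    calc _ ≤ ({a} : Finset (Fin n)).card := Finset.card_le_card hsub
    _ = 1 := Finset.card_singleton a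
  unfold phiVal
  rw [sort_pair_of_lt h, if_neg (by rw [hcard]; omega)]
  simp [List.range_succ, swap12]
lemma initSet_one {w : Equiv.Perm (Fin n)} (hn : 0 < n) :
    initSet w 1 = {w ⟨0, hn⟩} := by
  unfold initSet
  have : (Finset.univ.filter (fun i : Fin n => (i : ℕ) < 1)) = {⟨0, hn⟩} := by
    ext i
    simp [Fin.ext_iff, Nat.lt_one_iff]
  rw [this, Finset.image_singleton]

lemma initSet_two {w : Equiv.Perm (Fin n)} (hn : 2 ≤ n) :
    initSet w 2 = {w ⟨0, by omega⟩, w ⟨1, hn⟩} := by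
  unfold initSet
  have : (Finset.univ.filter (fun i : Fin n => (i : ℕ) < 2)) = {⟨0, by omega⟩, ⟨1, hn⟩} := by
    ext i
    simp [Fin.ext_iff]
    omega
  rw [this, Finset.image_insert, Finset.image_singleton]

lemma finsetLE_single {a b : Fin n} : finsetLE {a} {b} ↔ a ≤ b := by
  unfold finsetLE
  rw [Finset.sort_singleton, Finset.sort_singleton]
  simp

lemma finsetLE_pair {a b c d : Fin n} (hab : a < b) (hcd : c < d) :
    finsetLE {a, b} {c, d} ↔ a ≤ c ∧ b ≤ d := by
  unfold finsetLE
  rw [sort_pair_of_lt hab, sort_pair_of_lt hcd]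
  simp

end Helpers
section Key
variable {K : Type*} [Field K] {n ℓ : ℕ} {w : Equiv.Perm (Fin n)}

lemma piw_X_of_mem (A : PIdx n) (hA : A.1 ∈ Sw w) : piw K w (X A) = 0 := by
  rw [piw, aeval_X, dif_pos hA]

lemma piw_X_of_not_mem (A : PIdx n) (hA : A.1 ∉ Sw w) :
    piw K w (X A) = X (⟨A, hA⟩ : RIdx n w) := by
  rw [piw, aeval_X, dif_neg hA]

lemma not_monomialFree_of_XX (C D : RIdx n w)
    (h : (X C : MvPolynomial (RIdx n w) K) * X D ∈ Fnlw K n ℓ w) :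
    ¬ MonomialFree (Fnlw K n ℓ w) := by
  intro hMF
  apply hMF (Finsupp.single C 1 + Finsupp.single D 1)
  have : (X C : MvPolynomial (RIdx n w) K) * X D =
      monomial (Finsupp.single C 1 + Finsupp.single D 1) 1 := by
    rw [← pow_one (X C), ← pow_one (X D), X_pow_eq_monomial, X_pow_eq_monomial,
      monomial_mul, one_mul]
  rwa [← this]

lemma key_sub (A B C D : PIdx n) (hA : A.1 ∈ Sw w) (hC : C.1 ∉ Sw w) (hD : D.1 ∉ Sw w)
    (hker : (X A : MvPolynomial (PIdx n) K) * X B - X C * X D ∈ Fnl K n ℓ) :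
    ¬ MonomialFree (Fnlw K n ℓ w) := by
  apply not_monomialFree_of_XX (⟨C, hC⟩ : RIdx n w) ⟨D, hD⟩
  have hmem : piw K w (X A * X B - X C * X D) ∈ Fnlw K n ℓ w :=
    Ideal.mem_map_of_mem _ hker
  rw [map_sub, map_mul, map_mul, piw_X_of_mem A hA, piw_X_of_not_mem C hC,
    piw_X_of_not_mem D hD, zero_mul, zero_sub] at hmem
  simpa using (Fnlw K n ℓ w).neg_mem hmem

lemma key_add (A B C D : PIdx n) (hA : A.1 ∈ Sw w) (hC : C.1 ∉ Sw w) (hD : D.1 ∉ Sw w)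
    (hker : (X A : MvPolynomial (PIdx n) K) * X B + X C * X D ∈ Fnl K n ℓ) :
    ¬ MonomialFree (Fnlw K n ℓ w) := by
  apply not_monomialFree_of_XX (⟨C, hC⟩ : RIdx n w) ⟨D, hD⟩
  have hmem : piw K w (X A * X B + X C * X D) ∈ Fnlw K n ℓ w :=
    Ideal.mem_map_of_mem _ hker
  rwa [map_add, map_mul, map_mul, piw_X_of_mem A hA, piw_X_of_not_mem C hC,
    piw_X_of_not_mem D hD, zero_mul, zero_add] at hmem

end Key
section NeUniv
variable {n : ℕ}

lemma singleton_ne_univ (hn : 2 ≤ n) (a : Fin n) : ({a} : Finset (Fin n)) ≠ Finset.univ := by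
  intro h
  have := congrArg Finset.card h
  rw [Finset.card_singleton, Finset.card_univ, Fintype.card_fin] at this
  omega

lemma pair_ne_univ (hn : 3 ≤ n) (a b : Fin n) : ({a, b} : Finset (Fin n)) ≠ Finset.univ := by
  intro h
  have := congrArg Finset.card h
  rw [Finset.card_univ, Fintype.card_fin] at this
  have h2 := Finset.card_insert_le a ({b} : Finset (Fin n))
  rw [Finset.card_singleton] at h2
  omega

end NeUniv
set_option maxHeartbeats 1000000 in
lemma ker_case1 (K : Type*) [Field K] (n ℓ : ℕ) (hn : 3 ≤ n) (hn0 : 0 < n) (hn2 : 2 ≤ n)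
    (hc : ℓ < n - 1) :
    (X (⟨{⟨n - 1, by omega⟩}, Finset.singleton_nonempty _, singleton_ne_univ hn2 _⟩ : PIdx n) :
        MvPolynomial (PIdx n) K) *
      X ⟨{⟨0, hn0⟩, ⟨n - 2, by omega⟩}, Finset.insert_nonempty _ _, pair_ne_univ hn _ _⟩ -
    X ⟨{⟨n - 2, by omega⟩}, Finset.singleton_nonempty _, singleton_ne_univ hn2 _⟩ *
      X ⟨{⟨0, hn0⟩, ⟨n - 1, by omega⟩}, Finset.insert_nonempty _ _, pair_ne_univ hn _ _⟩
    ∈ Fnl K n ℓ := by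
  rw [Fnl, RingHom.mem_ker, map_sub, map_mul, map_mul]
  simp only [phiMap, aeval_X]
  rw [phiVal_single, phiVal_single,
    phiVal_pair_neg (a := ⟨0, hn0⟩) (b := ⟨n - 2, by omega⟩)
      (show (0:ℕ) < n - 2 by omega) (show ℓ < n - 2 + 1 by omega),
    phiVal_pair_neg (a := ⟨0, hn0⟩) (b := ⟨n - 1, by omega⟩)
      (show (0:ℕ) < n - 1 by omega) (show ℓ < n - 1 + 1 by omega)]
  ring

set_option maxHeartbeats 1000000 in
lemma ker_case2 (K : Type*) [Field K] (n ℓ : ℕ) (hn : 3 ≤ n) (hn0 : 0 < n) (hn2 : 2 ≤ n)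
    (hc : n - 1 ≤ ℓ) (h2 : ℓ ≤ n - 1) :
    (X (⟨{⟨n - 1, by omega⟩}, Finset.singleton_nonempty _, singleton_ne_univ hn2 _⟩ : PIdx n) :
        MvPolynomial (PIdx n) K) *
      X ⟨{⟨0, hn0⟩, ⟨1, by omega⟩}, Finset.insert_nonempty _ _, pair_ne_univ hn _ _⟩ +
    X ⟨{⟨0, hn0⟩}, Finset.singleton_nonempty _, singleton_ne_univ hn2 _⟩ *
      X ⟨{⟨1, by omega⟩, ⟨n - 1, by omega⟩}, Finset.insert_nonempty _ _, pair_ne_univ hn _ _⟩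
    ∈ Fnl K n ℓ := by
  rw [Fnl, RingHom.mem_ker, map_add, map_mul, map_mul]
  simp only [phiMap, aeval_X]
  rw [phiVal_single, phiVal_single,
    phiVal_pair_pos (a := ⟨0, hn0⟩) (b := ⟨1, by omega⟩)
      (show (0:ℕ) < 1 by omega) (show (0:ℕ) + 1 ≤ ℓ by omega)
      (show (1:ℕ) + 1 ≤ ℓ by omega),
    phiVal_pair_neg (a := ⟨1, by omega⟩) (b := ⟨n - 1, by omega⟩)
      (show (1:ℕ) < n - 1 by omega) (show ℓ < n - 1 + 1 by omega)]
  ring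

set_option maxHeartbeats 1000000

theorem stmt10 (K : Type*) [Field K] [CharZero K] (n ℓ : ℕ) (hn : 3 ≤ n)
    (h1 : 1 ≤ ℓ) (h2 : ℓ ≤ n - 1) (w : Equiv.Perm (Fin n))
    (hw : olList w = (n - 1) :: n :: descTo1 (n - 2)) :
    ¬ MonomialFree (Fnlw K n ℓ w) := by
  have hn0 : 0 < n := by omega
  have hn2 : 2 ≤ n := by omega
  have h0 : (w ⟨0, hn0⟩ : ℕ) = n - 2 := by
    have h := congrArg (fun l => l.getD 0 0) hw
    simp only [olList] at h
    rw [List.getD_eq_getElem _ _ (by simpa using hn0), List.getElem_map,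
      List.getElem_finRange] at h
    simp at h
    omega
  have h1' : (w ⟨1, by omega⟩ : ℕ) = n - 1 := by
    have h := congrArg (fun l => l.getD 1 0) hw
    simp only [olList] at h
    rw [List.getD_eq_getElem _ _ (by simpa using by omega : 1 < ((List.finRange n).map _).length),
      List.getElem_map, List.getElem_finRange] at h
    simp at h
    omega
  -- Sw facts
  have hSwTop : ({(⟨n - 1, by omega⟩ : Fin n)} : Finset (Fin n)) ∈ Sw w := by
    simp only [Sw, Set.mem_setOf_eq, Finset.card_singleton]
    rw [initSet_one hn0, finsetLE_single]
    intro hle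
    have hh : n - 1 ≤ (w ⟨0, hn0⟩ : ℕ) := hle
    omega
  have hSwS : ∀ a : Fin n, (a : ℕ) ≤ n - 2 → ({a} : Finset (Fin n)) ∉ Sw w := by
    intro a ha hmem
    simp only [Sw, Set.mem_setOf_eq, Finset.card_singleton] at hmem
    rw [initSet_one hn0, finsetLE_single] at hmem
    exact hmem (show (a : ℕ) ≤ (w ⟨0, hn0⟩ : ℕ) by omega)
  have hSwP : ∀ a b : Fin n, a < b → (a : ℕ) ≤ n - 2 → ({a, b} : Finset (Fin n)) ∉ Sw w := by
    intro a b hab ha hmem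
    simp only [Sw, Set.mem_setOf_eq] at hmem
    rw [Finset.card_pair hab.ne, initSet_two hn2] at hmem
    have hlt : w ⟨0, hn0⟩ < w ⟨1, by omega⟩ :=
      show (w ⟨0, hn0⟩ : ℕ) < (w ⟨1, by omega⟩ : ℕ) by omega
    rw [finsetLE_pair hab hlt] at hmem
    refine hmem ⟨show (a : ℕ) ≤ (w ⟨0, hn0⟩ : ℕ) by omega, ?_⟩
    show (b : ℕ) ≤ (w ⟨1, by omega⟩ : ℕ)
    have := b.isLt
    omega
  rcases Nat.lt_or_ge ℓ (n - 1) with hc | hc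
  · -- case ℓ ≤ n - 2 : use P_{n}·P_{1,n-1} - P_{n-1}·P_{1,n}
    refine key_sub (w := w)
      ⟨{⟨n - 1, by omega⟩}, Finset.singleton_nonempty _, singleton_ne_univ hn2 _⟩
      ⟨{⟨0, hn0⟩, ⟨n - 2, by omega⟩}, Finset.insert_nonempty _ _, pair_ne_univ hn _ _⟩
      ⟨{⟨n - 2, by omega⟩}, Finset.singleton_nonempty _, singleton_ne_univ hn2 _⟩
      ⟨{⟨0, hn0⟩, ⟨n - 1, by omega⟩}, Finset.insert_nonempty _ _, pair_ne_univ hn _ _⟩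
      hSwTop
      (hSwS ⟨n - 2, by omega⟩ (le_refl _))
      (hSwP ⟨0, hn0⟩ ⟨n - 1, by omega⟩ (show (0:ℕ) < n - 1 by omega) (Nat.zero_le _))
      (ker_case1 K n ℓ hn hn0 hn2 hc)
  · -- case ℓ = n - 1 : use P_{n}·P_{1,2} + P_{1}·P_{2,n}
    refine key_add (w := w)
      ⟨{⟨n - 1, by omega⟩}, Finset.singleton_nonempty _, singleton_ne_univ hn2 _⟩
      ⟨{⟨0, hn0⟩, ⟨1, by omega⟩}, Finset.insert_nonempty _ _, pair_ne_univ hn _ _⟩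
      ⟨{⟨0, hn0⟩}, Finset.singleton_nonempty _, singleton_ne_univ hn2 _⟩
      ⟨{⟨1, by omega⟩, ⟨n - 1, by omega⟩}, Finset.insert_nonempty _ _, pair_ne_univ hn _ _⟩
      hSwTop
      (hSwS ⟨0, hn0⟩ (Nat.zero_le _))
      (hSwP ⟨1, by omega⟩ ⟨n - 1, by omega⟩ (show (1:ℕ) < n - 1 by omega)
        (show (1:ℕ) ≤ n - 2 by omega))
      (ker_case2 K n ℓ hn hn0 hn2 hc h2)
end

section
/- Let n ≥ 1, 1 ≤ ℓ ≤ n, w ∈ P_ℓ, and t ≥ 2 with t ≤ n. Write ŵ_1 = min{w_1,…,w_t} and ŵ_2 = min({w_1,…,w_t} ∖ {ŵ_1}) for the two smallest values among the first t entries of w. If ŵ_1 ≥ 2 and ŵ_2 > ŵ_1 + 1, then either ŵ_1 = w_1 < ŵ_2 ≤ w_2 ≤ ℓ, or w_1 > w_2 = ℓ = ŵ_1. -/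
/-
Let `a < b` be the two smallest values among `w_1, …, w_t`. As `b > a + 1`, the value `a + 1`
and the values `1, …, a - 1` all lie beyond position `t`, so when `w_1 ≠ a` the entries
`w_1, a, a + 1` form a 312 pattern. If `w` is 312-free this forces `w_1 = a` and `w_2 > a + 1`,
and 312-freeness against these two entries forces `w|_{a+1} = (a, a+1, a-1, …, 1)`; condition (ii)
of `P_ℓ` with `m = a + 1` then gives `w_2 ≤ ℓ`. Otherwise condition (i) gives `w_1 > w_2 = ℓ`
with `w` minus `ℓ` 312-free, and the same pattern, which avoids `ℓ` unless `ℓ = a`, shows `ℓ = a`.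
-/

open MvPolynomial

theorem List312Free.not_sublist {l : List ℕ} (hl : List312Free l) {x y z : ℕ}
    (h : [x, y, z].Sublist l) : ¬ (y < z ∧ z < x) := by
  rintro ⟨hyz, hzx⟩
  obtain ⟨is, his, hpw⟩ := List.sublist_eq_map_getElem h
  match is, his, hpw with
  | [i, j, k], his, hpw =>
    simp only [List.map_cons, List.map_nil, List.cons.injEq] at his
    obtain ⟨rfl, rfl, rfl, -⟩ := his
    simp only [List.pairwise_cons, List.mem_cons] at hpw
    exact hl ⟨i, j, k, hpw.1 j (by simp), hpw.2.1 k (by simp), k.isLt,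
      by simpa [List.getD_eq_getElem] using hyz, by simpa [List.getD_eq_getElem] using hzx⟩

theorem mem_descTo1 {m x : ℕ} : x ∈ descTo1 m ↔ 1 ≤ x ∧ x ≤ m := by
  simp only [descTo1, List.mem_map, List.mem_reverse, List.mem_range]
  constructor
  · rintro ⟨k, hk, rfl⟩
    omega
  · intro h
    exact ⟨x - 1, by omega, by omega⟩

theorem pairwise_gt_descTo1 (m : ℕ) : (descTo1 m).Pairwise (· > ·) := by
  simpa [descTo1, List.pairwise_map, List.pairwise_reverse] using List.pairwise_lt_range (n := m)

section OneLine

variable {n : ℕ} (w : Equiv.Perm (Fin n))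

theorem length_olList : (olList w).length = n := by
  simp [olList]

theorem oneLine_eq_getElem {i : ℕ} (hi : 1 ≤ i) (hin : i ≤ n) :
    oneLine w i = (olList w)[i - 1]'(by rw [length_olList]; omega) := by
  simp [oneLine, olList, show i - 1 < n by omega]

theorem mem_olList {v : ℕ} : v ∈ olList w ↔ 1 ≤ v ∧ v ≤ n := by
  simp only [olList, List.mem_map, List.mem_finRange, true_and]
  constructor
  · rintro ⟨i, rfl⟩
    have := (w i).isLt
    omega
  · rintro ⟨h1, h2⟩
    exact ⟨w.symm ⟨v - 1, by omega⟩, by simp; omega⟩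

theorem nodup_olList : (olList w).Nodup :=
  (List.nodup_finRange n).map fun i j h => w.injective (Fin.ext (by simpa using h))

theorem oneLine_mem_Icc {i : ℕ} (hi : 1 ≤ i) (hin : i ≤ n) :
    1 ≤ oneLine w i ∧ oneLine w i ≤ n := by
  rw [← mem_olList, oneLine_eq_getElem w hi hin]
  exact List.getElem_mem _

theorem exists_oneLine_eq {v : ℕ} (h1 : 1 ≤ v) (h2 : v ≤ n) :
    ∃ i, 1 ≤ i ∧ i ≤ n ∧ oneLine w i = v := by
  obtain ⟨k, hk, hkv⟩ := List.getElem_of_mem ((mem_olList w).2 ⟨h1, h2⟩)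
  rw [length_olList] at hk
  exact ⟨k + 1, by omega, by omega, by rw [oneLine_eq_getElem w (by omega) (by omega)]; simpa⟩

theorem oneLine_injOn {i j : ℕ} (hi : 1 ≤ i) (hin : i ≤ n) (hj : 1 ≤ j) (hjn : j ≤ n)
    (h : oneLine w i = oneLine w j) : i = j := by
  rw [oneLine_eq_getElem w hi hin, oneLine_eq_getElem w hj hjn,
    (nodup_olList w).getElem_inj_iff] at h
  omega

theorem sublist_olList {i j k : ℕ} (hi : 1 ≤ i) (hij : i < j) (hjk : j < k) (hk : k ≤ n) :
    [oneLine w i, oneLine w j, oneLine w k].Sublist (olList w) := by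
  have hlen := length_olList w
  have := List.map_getElem_sublist (l := olList w)
    (is := [⟨i - 1, by omega⟩, ⟨j - 1, by omega⟩, ⟨k - 1, by omega⟩])
    (by simp only [List.pairwise_cons, List.mem_cons, Fin.lt_def]; grind)
  simpa [oneLine_eq_getElem w, hi, hk, show 1 ≤ j by omega, show 1 ≤ k by omega,
    show i ≤ n by omega, show j ≤ n by omega] using this

theorem filter_olList_eq_of_pairwise {m : ℕ} (hm : m ≤ n) {r : ℕ → ℕ → Prop}
    (hr : ∀ x y, r x y → ¬ r y x) {T : List ℕ} (hT : T.Pairwise r)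
    (hmemT : ∀ v, v ∈ T ↔ 1 ≤ v ∧ v ≤ m)
    (hord : ∀ i j, 1 ≤ i → i < j → j ≤ n → oneLine w i ≤ m → oneLine w j ≤ m →
      r (oneLine w i) (oneLine w j)) :
    (olList w).filter (fun v => v ≤ m) = T := by
  have hpw : ((olList w).filter (fun v => v ≤ m)).Pairwise r := by
    rw [List.pairwise_filter, List.pairwise_iff_getElem]
    intro i j hi hj hij hvi hvj
    rw [length_olList] at hi hj
    have := hord (i + 1) (j + 1) (by omega) (by omega) (by omega)
    simp only [oneLine_eq_getElem w (Nat.le_add_left 1 _) (by omega : i + 1 ≤ n),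
      oneLine_eq_getElem w (Nat.le_add_left 1 _) (by omega : j + 1 ≤ n),
      Nat.add_sub_cancel] at this
    simpa using this (by simpa using hvi) (by simpa using hvj)
  have hTnodup : T.Nodup := hT.imp fun {x y} hxy => by rintro rfl; exact hr x x hxy hxy
  have hperm : ((olList w).filter (fun v => v ≤ m)).Perm T := by
    rw [List.perm_ext_iff_of_nodup ((nodup_olList w).filter _) hTnodup]
    intro v
    simp only [List.mem_filter, mem_olList, hmemT, decide_eq_true_eq]
    omega
  exact hperm.eq_of_pairwise (fun x y _ _ hxy hyx => (hr x y hxy hyx).elim) hpw hT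

end OneLine

section SmallestValues

variable {n : ℕ} (w : Equiv.Perm (Fin n))

def PrefixGap (t a : ℕ) : Prop :=
  ∀ i, 1 ≤ i → i ≤ t → oneLine w i = a ∨ a + 1 < oneLine w i

variable {t a : ℕ}

theorem oneLine_two_ne_one (hn : 2 ≤ n) : oneLine w 2 ≠ oneLine w 1 := fun h =>
  absurd (oneLine_injOn w (by omega) hn le_rfl (by omega) h) (by omega)

theorem lt_of_oneLine_le_succ (hfirst : PrefixGap w t a) {i : ℕ} (hi : 1 ≤ i)
    (hle : oneLine w i ≤ a + 1) (hne : oneLine w i ≠ a) : t < i := by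
  by_contra h
  rcases hfirst i hi (by omega) with h' | h' <;> omega

theorem sublist_olList_of_oneLine_one_ne (hfirst : PrefixGap w t a)
    (hpos : ∃ p, 1 ≤ p ∧ p ≤ t ∧ oneLine w p = a) (han : a + 1 ≤ n)
    (h1 : oneLine w 1 ≠ a) : [oneLine w 1, a, a + 1].Sublist (olList w) := by
  obtain ⟨p, hp1, hpt, hpa⟩ := hpos
  obtain ⟨q, hq1, hqn, hqa⟩ := exists_oneLine_eq w (by omega) han
  have hpq : p < q := hpt.trans_lt (lt_of_oneLine_le_succ w hfirst hq1 hqa.le (by omega))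
  have hp : 1 < p := by
    rcases hp1.eq_or_lt with rfl | hp
    · exact absurd hpa h1
    · exact hp
  simpa [hpa, hqa] using sublist_olList w le_rfl hp hpq hqn

theorem List312Free.oneLine_one_eq (hfree : List312Free (olList w)) (hfirst : PrefixGap w t a)
    (ht : 1 ≤ t) (hpos : ∃ p, 1 ≤ p ∧ p ≤ t ∧ oneLine w p = a) (han : a + 1 ≤ n) :
    oneLine w 1 = a := by
  by_contra h1
  have := hfirst 1 le_rfl ht
  exact hfree.not_sublist (sublist_olList_of_oneLine_one_ne w hfirst hpos han h1)
    ⟨by omega, by omega⟩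

theorem List312Free.filter_olList_le_succ (hfree : List312Free (olList w))
    (hfirst : PrefixGap w t a) (ht : 2 ≤ t) (han : a + 1 ≤ n) (hw1 : oneLine w 1 = a) :
    (olList w).filter (fun v => v ≤ a + 1) = a :: (a + 1) :: descTo1 (a - 1) := by
  have hn : 2 ≤ n := by
    have := (oneLine_mem_Icc w le_rfl (by omega)).1
    omega
  have hw2 : a + 1 < oneLine w 2 :=
    (hfirst 2 (by omega) ht).resolve_left (hw1 ▸ oneLine_two_ne_one w hn)
  refine filter_olList_eq_of_pairwise w han
    (r := fun x y => (x = a ∧ y ≠ a) ∨ (x = a + 1 ∧ y < a) ∨ (y < x ∧ x < a))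
    (fun x y => by omega) ?_ (fun v => ?_) ?_
  · refine List.pairwise_cons.2 ⟨fun y hy => ?_, List.pairwise_cons.2 ⟨fun y hy => ?_,
      (pairwise_gt_descTo1 _).imp_of_mem fun hx hy hxy => ?_⟩⟩
    · rcases List.mem_cons.1 hy with rfl | hy
      · omega
      · have := mem_descTo1.1 hy
        omega
    · have := mem_descTo1.1 hy
      omega
    · have := mem_descTo1.1 hx
      omega
  · have := (oneLine_mem_Icc w le_rfl (by omega)).1
    simp only [List.mem_cons, mem_descTo1]
    omega
  · intro i j hi hij hjn hvi hvj
    have hxy : oneLine w i ≠ oneLine w j := fun h =>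
      absurd (oneLine_injOn w hi (by omega) (by omega) hjn h) (by omega)
    have hya : oneLine w j ≠ a := fun h =>
      absurd (oneLine_injOn w (by omega) hjn le_rfl (by omega) (h.trans hw1.symm)) (by omega)
    by_cases hxa : oneLine w i = a
    · exact Or.inl ⟨hxa, hya⟩
    have hti := lt_of_oneLine_le_succ w hfirst hi hvi hxa
    -- `w_1 = a` and `w_2 > a + 1` precede both entries; 312-freeness then forces the order.
    have hpat1 := hfree.not_sublist (sublist_olList w le_rfl (by omega) hij hjn)
    have hpat2 := hfree.not_sublist (sublist_olList w (i := 2) (by omega) (by omega) hij hjn)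
    rw [hw1] at hpat1
    show _ ∨ _ ∨ _
    omega

theorem oneLine_two_le_of_mem_Pset {ℓ : ℕ} (hw : w ∈ Pset n ℓ)
    (hfree : List312Free (olList w)) (hfirst : PrefixGap w t a) (ht : 2 ≤ t)
    (ha : 2 ≤ a) (han : a + 1 ≤ n) (hw1 : oneLine w 1 = a) : oneLine w 2 ≤ ℓ := by
  by_cases hℓ : ℓ = n
  · subst hℓ
    exact (oneLine_mem_Icc w (by omega) (by omega)).2
  · simp only [Pset, hℓ, if_false, Set.mem_ofPred_eq] at hw
    refine (hw.2 (a + 1) (by omega) han ?_).2.1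
    rw [show a + 1 - 1 = a by omega, show a + 1 - 2 = a - 1 by omega]
    exact hfree.filter_olList_le_succ w hfirst ht han hw1

theorem oneLine_two_eq_of_erase (hfirst : PrefixGap w t a) (ht : 2 ≤ t)
    (hpos : ∃ p, 1 ≤ p ∧ p ≤ t ∧ oneLine w p = a) (han : a + 1 ≤ n)
    (h21 : oneLine w 2 < oneLine w 1) (herase : List312Free ((olList w).erase (oneLine w 2))) :
    oneLine w 2 = a := by
  by_contra h2
  have h2a := (hfirst 2 (by omega) ht).resolve_left h2
  have hsub :=
    (sublist_olList_of_oneLine_one_ne w hfirst hpos han (by omega)).erase (oneLine w 2)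
  rw [List.erase_of_not_mem (by simp; omega)] at hsub
  exact herase.not_sublist hsub ⟨by omega, by omega⟩

end SmallestValues

theorem stmt18_general (n ℓ : ℕ)
    (w : Equiv.Perm (Fin n)) (hw : w ∈ Pset n ℓ)
    (t : ℕ) (ht2 : 2 ≤ t) (htn : t ≤ n)
    (a b : ℕ)
    (ha : a ∈ (Finset.Icc 1 t).image (oneLine w))
    (hb : b ∈ (Finset.Icc 1 t).image (oneLine w))
    (hsec : ∀ c ∈ (Finset.Icc 1 t).image (oneLine w), c ≠ a → b ≤ c)
    (ha2 : 2 ≤ a) (hgap : a + 1 < b) :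
    (a = oneLine w 1 ∧ a < b ∧ b ≤ oneLine w 2 ∧ oneLine w 2 ≤ ℓ) ∨
    (oneLine w 2 < oneLine w 1 ∧ oneLine w 2 = ℓ ∧ ℓ = a) := by
  have hmem : ∀ i, 1 ≤ i → i ≤ t → oneLine w i ∈ (Finset.Icc 1 t).image (oneLine w) :=
    fun i hi hit => Finset.mem_image_of_mem _ (Finset.mem_Icc.2 ⟨hi, hit⟩)
  have hfirst : PrefixGap w t a := fun i hi hit =>
    or_iff_not_imp_left.2 fun h => hgap.trans_le (hsec _ (hmem i hi hit) h)
  obtain ⟨p, hp, hpa⟩ := Finset.mem_image.1 ha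
  obtain ⟨q, hq, hqb⟩ := Finset.mem_image.1 hb
  rw [Finset.mem_Icc] at hp hq
  have han : a + 1 ≤ n := by
    have := (oneLine_mem_Icc w hq.1 (hq.2.trans htn)).2
    omega
  have hpos : ∃ p, 1 ≤ p ∧ p ≤ t ∧ oneLine w p = a := ⟨p, hp.1, hp.2, hpa⟩
  by_cases hfree : List312Free (olList w)
  · have hw1 := hfree.oneLine_one_eq w hfirst (by omega) hpos han
    have hb2 := hsec _ (hmem 2 (by omega) ht2) (hw1 ▸ oneLine_two_ne_one w (by omega))
    exact Or.inl ⟨hw1.symm, by omega, hb2,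
      oneLine_two_le_of_mem_Pset w hw hfree hfirst ht2 ha2 han hw1⟩
  · have hℓ : ℓ ≠ n := by
      rintro rfl
      exact hfree (by simpa [Pset] using hw)
    simp only [Pset, hℓ, if_false, Set.mem_ofPred_eq] at hw
    obtain ⟨h2ℓ, h21, herase⟩ := hw.1 hfree
    rw [← h2ℓ] at herase
    have h2a := oneLine_two_eq_of_erase w hfirst ht2 hpos han h21 herase
    exact Or.inr ⟨h21, h2ℓ, h2ℓ ▸ h2a⟩

theorem stmt18 (n ℓ : ℕ) (hn : 1 ≤ n) (h1 : 1 ≤ ℓ) (h2 : ℓ ≤ n)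
    (w : Equiv.Perm (Fin n)) (hw : w ∈ Pset n ℓ)
    (t : ℕ) (ht2 : 2 ≤ t) (htn : t ≤ n)
    (a b : ℕ)
    (ha : a ∈ (Finset.Icc 1 t).image (oneLine w))
    (hb : b ∈ (Finset.Icc 1 t).image (oneLine w))
    (hmin : ∀ c ∈ (Finset.Icc 1 t).image (oneLine w), a ≤ c)
    (hsec : ∀ c ∈ (Finset.Icc 1 t).image (oneLine w), c ≠ a → b ≤ c)
    (hba : b ≠ a) (ha2 : 2 ≤ a) (hgap : a + 1 < b) :
    (a = oneLine w 1 ∧ a < b ∧ b ≤ oneLine w 2 ∧ oneLine w 2 ≤ ℓ) ∨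
    (oneLine w 2 < oneLine w 1 ∧ oneLine w 2 = ℓ ∧ ℓ = a) :=
  stmt18_general n ℓ w hw t ht2 htn a b ha hb hsec ha2 hgap
end
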